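/- arXiv:1705.06411 — 3 statements merged into one kernel-verified Lean document; each statement's English description precedes it below -/
import Mathlib

section
/- Red(M) is semi-reduced, i.e., Red(Red(M)) = Red(M): the sum of all reduced submodules of M, viewed as a module, equals the sum of its own reduced submodules. -/
/-!
A reduced submodule `N` of `M` lies in `Red(M)`, and its preimage in `Red(M)` is again reduced
(reducedness pulls back along injective maps), hence lies in `Red(Red(M))`. So the image of
`Red(Red(M))` in `M` contains every reduced submodule, hence all of `Red(M)`.
-/

/-- `Red M`: the sum of all reduced submodules of `M`. -/
def redSubmodule (R : Type*) [CommRing R] (M : Type*) [AddCommGroup M]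
    [Module R M] : Submodule R M :=
  sSup {N : Submodule R M | ∀ (r : R), ∀ x ∈ N, r ^ 2 • x = 0 → r • x = 0}

def Submodule.IsReduced {R M : Type*} [Semiring R] [AddCommMonoid M] [Module R M]
    (N : Submodule R M) : Prop :=
  ∀ (r : R), ∀ x ∈ N, r ^ 2 • x = 0 → r • x = 0

theorem Submodule.IsReduced.comap_of_injective {R M M' : Type*} [Semiring R]
    [AddCommMonoid M] [AddCommMonoid M'] [Module R M] [Module R M'] {f : M →ₗ[R] M'}
    (hf : Function.Injective f) {N : Submodule R M'} (hN : N.IsReduced) :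
    (N.comap f).IsReduced := by
  intro r x hx hr2
  refine hf ?_
  rw [map_smul, map_zero]
  exact hN r (f x) hx (by rw [← map_smul, hr2, map_zero])

theorem le_redSubmodule {R M : Type*} [CommRing R] [AddCommGroup M] [Module R M]
    {N : Submodule R M} (hN : N.IsReduced) : N ≤ redSubmodule R M :=
  le_sSup hN

/-- `Red(M)` is semi-reduced: the sum of the reduced submodules of the module
`Red(M)` is all of `Red(M)`. -/
theorem red_is_semiReduced (R : Type*) [CommRing R] (M : Type*) [AddCommGroup M]
    [Module R M] : redSubmodule R (redSubmodule R M) = ⊤ := by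
  set P := redSubmodule R M
  rw [eq_top_iff, ← Submodule.map_le_map_iff_of_injective P.injective_subtype,
    Submodule.map_subtype_top]
  refine sSup_le fun N (hN : N.IsReduced) => ?_
  calc N = (N.comap P.subtype).map P.subtype := by
        rw [Submodule.map_comap_subtype, inf_eq_right.mpr (le_redSubmodule hN)]
    _ ≤ (redSubmodule R P).map P.subtype :=
        Submodule.map_mono (le_redSubmodule (hN.comap_of_injective P.injective_subtype))
end

section
/- If M is a Noetherian R-module, then any direct sum of Red-M-injective modules is Red-M-injective: if each D_i is Red-M-injective, then ⨁_{i∈I} D_i is Red-M-injective (every R-linear map from any semi-reduced submodule K of M into ⨁ D_i extends to M). -/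
/-!
Since `M` is Noetherian, `K` is finitely generated, so `f : K → ⨁ i, D i` takes values in the
summands indexed by a finite set `S`. Extending each component `K → D i` with `i ∈ S` to `M` and
summing these extensions over `S` extends `f`.
-/

/-- A submodule `K` is semi-reduced if it is the sum of its reduced submodules. -/
def IsSemiReduced (R : Type*) [CommRing R] (M : Type*) [AddCommGroup M]
    [Module R M] (K : Submodule R M) : Prop :=
  K = sSup {N : Submodule R M |
        N ≤ K ∧ ∀ (r : R), ∀ x ∈ N, r ^ 2 • x = 0 → r • x = 0}

namespace DirectSum

variable {R : Type*} [Semiring R] {I : Type*} [DecidableEq I] {D : I → Type*}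
  [∀ i, AddCommMonoid (D i)] [∀ i, Module R (D i)]

theorem sum_lof_component_of_forall_notMem {S : Finset I} {y : ⨁ i, D i}
    (hy : ∀ j ∉ S, y j = 0) : ∑ i ∈ S, lof R I D i (component R I D i y) = y := by
  ext j
  rw [DFinsupp.finsetSum_apply]
  by_cases hj : j ∈ S
  · rw [Finset.sum_eq_single j (fun i _ hij => by simp [lof_eq_of, of_apply, hij])
      (absurd hj)]
    exact lof_apply R j _
  · rw [Finset.sum_eq_zero fun i hi => by
      simp [lof_eq_of, of_apply, show i ≠ j from fun h => hj (h ▸ hi)], hy j hj]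

theorem exists_finset_sum_lof_component_comp_eq {K : Type*} [AddCommMonoid K] [Module R K]
    [Module.Finite R K] (f : K →ₗ[R] ⨁ i, D i) :
    ∃ S : Finset I, (∑ i ∈ S, lof R I D i ∘ₗ component R I D i) ∘ₗ f = f := by
  classical
  obtain ⟨s, hs⟩ := Module.Finite.fg_top (R := R) (M := K)
  refine ⟨s.sup fun x => (f x).support, LinearMap.ext_on hs fun y hy => ?_⟩
  have hsupp : (f y).support ⊆ s.sup fun x => (f x).support :=
    Finset.le_sup (f := fun x => (f x).support) hy
  simpa [LinearMap.sum_apply] using sum_lof_component_of_forall_notMem fun j hj =>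
    DFinsupp.notMem_support_iff.mp fun h => hj (hsupp h)

theorem exists_extension_of_forall_component {M : Type*} [AddCommMonoid M] [Module R M]
    {K : Submodule R M} [Module.Finite R K] (f : K →ₗ[R] ⨁ i, D i)
    (h : ∀ i, ∃ g : M →ₗ[R] D i, ∀ x : K, g x = component R I D i (f x)) :
    ∃ g : M →ₗ[R] ⨁ i, D i, ∀ x : K, g x = f x := by
  choose g hg using h
  obtain ⟨S, hS⟩ := exists_finset_sum_lof_component_comp_eq f
  refine ⟨∑ i ∈ S, lof R I D i ∘ₗ g i, fun x => ?_⟩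
  conv_rhs => rw [← hS]
  simp [LinearMap.sum_apply, hg]

end DirectSum

theorem directSum_redInjective_of_noetherian (R : Type*) [CommRing R]
    (M : Type*) [AddCommGroup M] [Module R M] [IsNoetherian R M]
    (I : Type*) [DecidableEq I] (D : I → Type*) [∀ i, AddCommGroup (D i)]
    [∀ i, Module R (D i)]
    (hD : ∀ i, ∀ (K : Submodule R M), IsSemiReduced R M K →
      ∀ f : K →ₗ[R] D i, ∃ g : M →ₗ[R] D i, ∀ x : K, g x = f x) :
    ∀ (K : Submodule R M), IsSemiReduced R M K →
      ∀ f : K →ₗ[R] (DirectSum I D),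
        ∃ g : M →ₗ[R] (DirectSum I D), ∀ x : K, g x = f x := fun K hK f =>
  DirectSum.exists_extension_of_forall_component f fun i =>
    hD i K hK (DirectSum.component R I D i ∘ₗ f)
end

section
/- Let N be a Red-quasi-injective R-module (every R-linear map Red(N) → N extends to N, and more generally every map from a semi-reduced submodule of N into N extends to N). If P and Q are semi-reduced submodules of N with P ≅ Q and P a direct summand of N, then Q is a direct summand of N (Red-C2 condition). -/
/-- Composing `g` with the projection onto `P` and with `e` gives a retraction of `N` onto `Q`. -/
theorem Submodule.exists_isCompl_of_extend_equiv_symm {R N : Type*} [Ring R] [AddCommGroup N]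
    [Module R N] {P Q : Submodule R N} (hP : ∃ P' : Submodule R N, IsCompl P P')
    (e : P ≃ₗ[R] Q) (g : N →ₗ[R] N) (hg : ∀ x : Q, g x = (e.symm x : N)) :
    ∃ Q' : Submodule R N, IsCompl Q Q' := by
  obtain ⟨P', hPP'⟩ := hP
  let r : N →ₗ[R] Q := (e : P →ₗ[R] Q) ∘ₗ P.projectionOnto P' hPP' ∘ₗ g
  refine ⟨LinearMap.ker r, LinearMap.isCompl_of_proj fun q => ?_⟩
  simp [r, hg q, Submodule.projectionOnto_apply_left]

theorem red_C2_general (R : Type*) [CommRing R]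
    (N : Type*) [AddCommGroup N] [Module R N]
    (hN : ∀ (K : Submodule R N), IsSemiReduced R N K →
      ∀ f : K →ₗ[R] N, ∃ g : N →ₗ[R] N, ∀ x : K, g x = f x)
    (P Q : Submodule R N) (hQ : IsSemiReduced R N Q)
    (e : P ≃ₗ[R] Q) (hPsum : ∃ P' : Submodule R N, IsCompl P P') :
    ∃ Q' : Submodule R N, IsCompl Q Q' := by
  obtain ⟨g, hg⟩ := hN Q hQ (P.subtype ∘ₗ (e.symm : Q →ₗ[R] P))
  exact Submodule.exists_isCompl_of_extend_equiv_symm hPsum e g hg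

/-- Red-C2 condition for Red-quasi-injective modules. -/
theorem red_C2 (R : Type*) [CommRing R]
    (N : Type*) [AddCommGroup N] [Module R N]
    (hN : ∀ (K : Submodule R N), IsSemiReduced R N K →
      ∀ f : K →ₗ[R] N, ∃ g : N →ₗ[R] N, ∀ x : K, g x = f x)
    (P Q : Submodule R N) (hP : IsSemiReduced R N P) (hQ : IsSemiReduced R N Q)
    (e : P ≃ₗ[R] Q) (hPsum : ∃ P' : Submodule R N, IsCompl P P') :
    ∃ Q' : Submodule R N, IsCompl Q Q' :=
  red_C2_general R N hN P Q hQ e hPsum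
end
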